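/- Let L > 0, R > 0, α > 0, and let H : [0,∞) → [0,1] be measurable and integrable with ‖H‖₁ = ∫_0^∞ H(x) dx. Define g(x) = ∫_0^L H(ρ_L(0,z)/R) H(ρ_L(x,z)/R) dz for x ∈ [0,L]. Then the integral of e^{g(x)} − 1 over the set Ψ_α = { x ∈ [0,L] : g(x) > α } satisfies ∫_{Ψ_α} (e^{g(x)} − 1) dx ≤ (4 R² ‖H‖₁² / α) (e^{2 R ‖H‖₁} − 1). -/

import Mathlib

/-!
Since `0 ≤ H ≤ 1`, `g(x) ≤ ∫₀ᴸ h^L(0,z) dz`, and on the circle every row integral of the kernel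
equals `∫₀ᴸ H(ρ_L(u,0)/R) du = 2 ∫₀^{L/2} H(u/R) du ≤ 2R‖H‖₁` by translation invariance.
Hence `0 ≤ g ≤ 2R‖H‖₁` and, by Fubini, `∫₀ᴸ g ≤ (2R‖H‖₁)²`. Markov's inequality bounds
`|Ψ_α| ≤ (2R‖H‖₁)²/α`, and `e^g - 1 ≤ e^{2R‖H‖₁} - 1` on `Ψ_α`.
-/

open MeasureTheory Real

/-- Toroidal (circular) distance on `[0, L]`. -/
noncomputable def torDist (L x y : ℝ) : ℝ := min |x - y| (L - |x - y|)

open Set intervalIntegral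

lemma IntervalIntegrable.of_mem_Icc {f : ℝ → ℝ} {a b c d : ℝ}
    (hf : IntervalIntegrable f volume a b) (hab : a ≤ b) (hc : c ∈ Icc a b)
    (hd : d ∈ Icc a b) : IntervalIntegrable f volume c d :=
  hf.mono_set (uIcc_of_le hab ▸ uIcc_subset_Icc hc hd)

lemma integral_comp_sub_eq_of_periodicOn {k : ℝ → ℝ} {L z : ℝ}
    (hk : IntervalIntegrable k volume (-L) L) (hper : ∀ u ∈ Icc (-L) 0, k (u + L) = k u)
    (hz : z ∈ Icc 0 L) :
    ∫ x in 0..L, k (x - z) = ∫ x in 0..L, k x := by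
  obtain ⟨hz0, hzL⟩ := hz
  have hk' : ∀ {a b}, a ∈ Icc (-L) L → b ∈ Icc (-L) L → IntervalIntegrable k volume a b :=
    hk.of_mem_Icc (by linarith)
  have hshift : ∫ u in -z..0, k u = ∫ u in L - z..L, k u := by
    have h := integral_comp_add_right k L (a := -z) (b := 0)
    rw [neg_add_eq_sub, zero_add] at h
    rw [← h]
    refine integral_congr fun u hu => (hper u ?_).symm
    rw [uIcc_of_le (by linarith)] at hu
    exact ⟨by linarith [hu.1], hu.2⟩
  rw [integral_comp_sub_right, zero_sub, ← integral_add_adjacent_intervals (b := 0), hshift,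
    add_comm, integral_add_adjacent_intervals]
  all_goals exact hk' ⟨by linarith, by linarith⟩ ⟨by linarith, by linarith⟩

section TorDist

variable {L : ℝ}

lemma torDist_sub_zero (L x z : ℝ) : torDist L (x - z) 0 = torDist L x z := by
  simp [torDist]

lemma torDist_comm (L x z : ℝ) : torDist L x z = torDist L z x := by
  simp only [torDist, abs_sub_comm]

lemma torDist_add_period {u : ℝ} (hu : u ∈ Icc (-L) 0) : torDist L (u + L) 0 = torDist L u 0 := by
  simp only [torDist, sub_zero]
  rw [abs_of_nonneg (by linarith [hu.1]), abs_of_nonpos hu.2, min_comm]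
  ring_nf

lemma torDist_zero_of_le_half {u : ℝ} (hu : u ∈ Icc 0 (L / 2)) : torDist L u 0 = u := by
  simp only [torDist, sub_zero, abs_of_nonneg hu.1]
  exact min_eq_left (by linarith [hu.2])

lemma torDist_zero_of_half_le {u : ℝ} (hu : u ∈ Icc (L / 2) L) : torDist L u 0 = L - u := by
  have : 0 ≤ u := by linarith [hu.1, hu.2]
  simp only [torDist, sub_zero, abs_of_nonneg this]
  exact min_eq_right (by linarith [hu.1])

lemma continuous_torDist (L : ℝ) : Continuous fun p : ℝ × ℝ => torDist L p.1 p.2 := by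
  unfold torDist
  fun_prop

lemma integral_comp_torDist_eq {f : ℝ → ℝ}
    (hf : IntervalIntegrable (fun u => f (torDist L u 0)) volume (-L) L) {z : ℝ}
    (hz : z ∈ Icc 0 L) :
    ∫ x in 0..L, f (torDist L x z) = ∫ u in 0..L, f (torDist L u 0) := by
  simp only [← torDist_sub_zero L _ z]
  exact integral_comp_sub_eq_of_periodicOn hf (fun u hu => by rw [torDist_add_period hu]) hz

lemma integral_comp_torDist_zero {f : ℝ → ℝ} (hL : 0 ≤ L)
    (hf : IntervalIntegrable (fun u => f (torDist L u 0)) volume 0 L) :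
    ∫ u in 0..L, f (torDist L u 0) = 2 * ∫ u in 0..L / 2, f u := by
  have hleft : ∫ u in 0..L / 2, f (torDist L u 0) = ∫ u in 0..L / 2, f u := by
    refine integral_congr fun u hu => ?_
    rw [uIcc_of_le (by linarith)] at hu
    simp only [torDist_zero_of_le_half hu]
  have hright : ∫ u in L / 2..L, f (torDist L u 0) = ∫ u in 0..L / 2, f u := by
    have h := integral_comp_sub_left f L (a := L / 2) (b := L)
    rw [sub_self, sub_half] at h
    rw [← h]
    refine integral_congr fun u hu => ?_
    rw [uIcc_of_le (by linarith)] at hu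
    simp only [torDist_zero_of_half_le hu]
  rw [← integral_add_adjacent_intervals (b := L / 2), hleft, hright, two_mul]
  all_goals exact hf.of_mem_Icc hL ⟨by linarith, by linarith⟩ ⟨by linarith, by linarith⟩

end TorDist

lemma integral_integral_mul_le {X Y : Type*} [MeasurableSpace X] [MeasurableSpace Y]
    {μ : Measure X} {ν : Measure Y} [SFinite μ] [SFinite ν] {a : Y → ℝ} {k : X → Y → ℝ}
    {A B : ℝ} (hak : Integrable (fun p : X × Y => a p.2 * k p.1 p.2) (μ.prod ν))
    (ha : Integrable a ν) (ha0 : ∀ᵐ y ∂ν, 0 ≤ a y) (hA : ∫ y, a y ∂ν ≤ A)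
    (hk : ∀ᵐ y ∂ν, ∫ x, k x y ∂μ ≤ B) (hB : 0 ≤ B) :
    ∫ x, ∫ y, a y * k x y ∂ν ∂μ ≤ A * B := by
  have hsection : ∀ y, ∫ x, a y * k x y ∂μ = a y * ∫ x, k x y ∂μ := fun y =>
    integral_const_mul _ _
  rw [integral_integral_swap hak]
  calc ∫ y, ∫ x, a y * k x y ∂μ ∂ν ≤ ∫ y, a y * B ∂ν := by
        refine integral_mono_ae hak.integral_prod_right (ha.mul_const B) ?_
        filter_upwards [ha0, hk] with y hy0 hyk
        rw [hsection]
        exact mul_le_mul_of_nonneg_left hyk hy0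
    _ = (∫ y, a y ∂ν) * B := integral_mul_const _ _
    _ ≤ A * B := mul_le_mul_of_nonneg_right hA hB

lemma setIntegral_exp_sub_one_le {X : Type*} [MeasurableSpace X] {μ : Measure X} {s : Set X}
    {g : X → ℝ} {α B : ℝ} (hα : 0 < α) (hB : 0 ≤ B) (hs : MeasurableSet s) (hμs : μ s < ⊤)
    (hg : AEStronglyMeasurable g (μ.restrict s)) (hg0 : ∀ x ∈ s, 0 ≤ g x)
    (hgB : ∀ x ∈ s, g x ≤ B) :
    ∫ x in {x | x ∈ s ∧ g x > α}, (exp (g x) - 1) ∂μ ≤ (∫ x in s, g x ∂μ) / α * (exp B - 1) := by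
  set Ψ := {x | x ∈ s ∧ g x > α}
  have hΨs : Ψ ⊆ s := fun x hx => hx.1
  have hΨfin : μ Ψ < ⊤ := (measure_mono hΨs).trans_lt hμs
  have hgi : IntegrableOn g s μ := (integrableOn_const hμs.ne (C := B)).mono' hg
    (ae_restrict_of_forall_mem hs fun x hx => (abs_of_nonneg (hg0 x hx)).trans_le (hgB x hx))
  have markov : α * μ.real Ψ ≤ ∫ x in s, g x ∂μ := by
    have hΨ : μ Ψ ≤ μ.restrict s {x | α ≤ g x} :=
      (measure_mono (show Ψ ⊆ {x | α ≤ g x} ∩ s from fun x hx => ⟨hx.2.le, hx.1⟩)).trans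
        (Measure.le_restrict_apply _ _)
    refine le_trans ?_ (mul_meas_ge_le_integral_of_nonneg (ae_restrict_of_forall_mem hs hg0) hgi α)
    gcongr
    exact ENNReal.toReal_mono
      ((measure_mono (subset_univ _)).trans_lt (by rwa [Measure.restrict_apply_univ])).ne hΨ
  have hexp : ∀ x ∈ Ψ, ‖exp (g x) - 1‖ ≤ exp B - 1 := by
    intro x hx
    rw [Real.norm_eq_abs, abs_of_nonneg (by linarith [one_le_exp (hg0 x hx.1)])]
    linarith [exp_le_exp.2 (hgB x hx.1)]
  calc ∫ x in Ψ, (exp (g x) - 1) ∂μ ≤ (exp B - 1) * μ.real Ψ :=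
        (le_abs_self _).trans (norm_setIntegral_le_of_norm_le_const hΨfin hexp)
    _ ≤ (exp B - 1) * ((∫ x in s, g x ∂μ) / α) := by
        gcongr
        · linarith [one_le_exp hB]
        · rw [le_div_iff₀ hα]; linarith
    _ = (∫ x in s, g x ∂μ) / α * (exp B - 1) := mul_comm _ _

section Kernel

variable {L R : ℝ} {H : ℝ → ℝ}

noncomputable def torKernel (L R : ℝ) (H : ℝ → ℝ) (x z : ℝ) : ℝ := H (torDist L x z / R)

lemma measurable_torKernel (hmeas : Measurable H) :
    Measurable fun p : ℝ × ℝ => torKernel L R H p.1 p.2 :=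
  hmeas.comp ((continuous_torDist L).measurable.div_const R)

lemma intervalIntegrable_comp_of_le_one (hmeas : Measurable H) (h0 : ∀ x, 0 ≤ H x)
    (h1 : ∀ x, H x ≤ 1) {φ : ℝ → ℝ} (hφ : Measurable φ) (a b : ℝ) :
    IntervalIntegrable (fun u => H (φ u)) volume a b :=
  (intervalIntegrable_const (c := (1 : ℝ))).mono_fun' (hmeas.comp hφ).aestronglyMeasurable
    (ae_of_all _ fun u => by simp only [norm_eq_abs, abs_of_nonneg (h0 _), h1])

lemma intervalIntegrable_torKernel (hmeas : Measurable H) (h0 : ∀ x, 0 ≤ H x)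
    (h1 : ∀ x, H x ≤ 1) (x a b : ℝ) : IntervalIntegrable (torKernel L R H x) volume a b :=
  intervalIntegrable_comp_of_le_one hmeas h0 h1
    (((continuous_torDist L).measurable.comp measurable_prodMk_left).div_const R) a b

lemma integral_comp_div_le (hR : 0 < R) (h0 : ∀ x, 0 ≤ H x) (hint : IntegrableOn H (Ioi 0))
    {c : ℝ} (hc : 0 ≤ c) : ∫ u in 0..c, H (u / R) ≤ R * ∫ x in Ioi 0, H x := by
  rw [integral_comp_div H hR.ne', zero_div, smul_eq_mul,
    integral_of_le (div_nonneg hc hR.le)]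
  exact mul_le_mul_of_nonneg_left
    (setIntegral_mono_set hint (ae_of_all _ h0) Ioc_subset_Ioi_self.eventuallyLE) hR.le

lemma integral_torKernel_le (hL : 0 ≤ L) (hR : 0 < R) (hmeas : Measurable H)
    (h0 : ∀ x, 0 ≤ H x) (h1 : ∀ x, H x ≤ 1) (hint : IntegrableOn H (Ioi 0)) {z : ℝ}
    (hz : z ∈ Icc 0 L) :
    ∫ x in 0..L, torKernel L R H x z ≤ 2 * R * ∫ x in Ioi 0, H x := by
  have hφ : Measurable fun u => torDist L u 0 / R :=
    ((continuous_torDist L).measurable.comp measurable_prodMk_right).div_const R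
  simp only [torKernel]
  rw [integral_comp_torDist_eq (f := fun u => H (u / R))
      (intervalIntegrable_comp_of_le_one hmeas h0 h1 hφ _ _) hz,
    integral_comp_torDist_zero (f := fun u => H (u / R)) hL
      (intervalIntegrable_comp_of_le_one hmeas h0 h1 hφ _ _)]
  linarith [integral_comp_div_le hR h0 hint (c := L / 2) (by positivity)]

lemma integral_torKernel_zero_le (hL : 0 ≤ L) (hR : 0 < R) (hmeas : Measurable H)
    (h0 : ∀ x, 0 ≤ H x) (h1 : ∀ x, H x ≤ 1) (hint : IntegrableOn H (Ioi 0)) :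
    ∫ z in 0..L, torKernel L R H 0 z ≤ 2 * R * ∫ x in Ioi 0, H x := by
  simpa only [torKernel, torDist_comm L 0] using
    integral_torKernel_le hL hR hmeas h0 h1 hint ⟨le_rfl, hL⟩

lemma integral_torKernel_mul_le (hL : 0 ≤ L) (hR : 0 < R) (hmeas : Measurable H)
    (h0 : ∀ x, 0 ≤ H x) (h1 : ∀ x, H x ≤ 1) (hint : IntegrableOn H (Ioi 0)) (x : ℝ) :
    ∫ z in Ioc 0 L, torKernel L R H 0 z * torKernel L R H x z ≤ 2 * R * ∫ x in Ioi 0, H x := by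
  calc ∫ z in Ioc 0 L, torKernel L R H 0 z * torKernel L R H x z
      ≤ ∫ z in Ioc 0 L, torKernel L R H 0 z :=
        integral_mono_of_nonneg (ae_of_all _ fun z => mul_nonneg (h0 _) (h0 _))
          (intervalIntegrable_torKernel hmeas h0 h1 0 0 L).1
          (ae_of_all _ fun z => mul_le_of_le_one_right (h0 _) (h1 _))
    _ ≤ 2 * R * ∫ x in Ioi 0, H x := by
        rw [← integral_of_le hL]
        exact integral_torKernel_zero_le hL hR hmeas h0 h1 hint

lemma measurable_integral_torKernel_mul (hmeas : Measurable H) :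
    Measurable fun x => ∫ z in Ioc 0 L, torKernel L R H 0 z * torKernel L R H x z :=
  (((measurable_torKernel hmeas).comp (measurable_const.prodMk measurable_snd)).mul
    (measurable_torKernel hmeas)).stronglyMeasurable.integral_prod_right'.measurable

lemma integral_integral_torKernel_mul_le (hL : 0 ≤ L) (hR : 0 < R) (hmeas : Measurable H)
    (h0 : ∀ x, 0 ≤ H x) (h1 : ∀ x, H x ≤ 1) (hint : IntegrableOn H (Ioi 0)) :
    ∫ x in Ioc 0 L, ∫ z in Ioc 0 L, torKernel L R H 0 z * torKernel L R H x z
      ≤ 2 * R * (∫ x in Ioi 0, H x) * (2 * R * ∫ x in Ioi 0, H x) := by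
  have hM : 0 ≤ ∫ x in Ioi 0, H x := setIntegral_nonneg measurableSet_Ioi fun x _ => h0 x
  have hk := measurable_torKernel (L := L) (R := R) hmeas
  refine integral_integral_mul_le ?_ ?_ (ae_of_all _ fun z => h0 _) ?_ ?_ (by positivity)
  · refine (integrable_const (1 : ℝ)).mono'
      ((hk.comp (measurable_const.prodMk measurable_snd)).mul hk).aestronglyMeasurable
      (ae_of_all _ fun p => ?_)
    exact (abs_of_nonneg (mul_nonneg (h0 _) (h0 _))).trans_le (mul_le_one₀ (h1 _) (h0 _) (h1 _))
  · exact (intervalIntegrable_torKernel hmeas h0 h1 0 0 L).1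
  · rw [← integral_of_le hL]
    exact integral_torKernel_zero_le hL hR hmeas h0 h1 hint
  · refine (ae_restrict_mem measurableSet_Ioc).mono fun z hz => ?_
    rw [← integral_of_le hL]
    exact integral_torKernel_le hL hR hmeas h0 h1 hint ⟨hz.1.le, hz.2⟩

end Kernel

/-- The integral of `e^{g(x)} − 1` over `Ψ_α = { x ∈ [0,L] : g(x) > α }` is at most
`(4 R² ‖H‖₁² / α)(e^{2R‖H‖₁} − 1)`, where
`g(x) = ∫_0^L H(ρ_L(0,z)/R) H(ρ_L(x,z)/R) dz`. -/
theorem stmt_5 (L R α : ℝ) (hL : 0 < L) (hR : 0 < R) (hα : 0 < α) (H : ℝ → ℝ)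
    (hmeas : Measurable H) (h0 : ∀ x, 0 ≤ H x) (h1 : ∀ x, H x ≤ 1)
    (hint : IntegrableOn H (Set.Ioi 0))
    (g : ℝ → ℝ)
    (hg : ∀ x, g x = ∫ z in (0:ℝ)..L, H (torDist L 0 z / R) * H (torDist L x z / R)) :
    ∫ x in {x : ℝ | x ∈ Set.Icc (0:ℝ) L ∧ g x > α}, (Real.exp (g x) - 1)
      ≤ (4 * R ^ 2 * (∫ x in Set.Ioi (0:ℝ), H x) ^ 2 / α)
          * (Real.exp (2 * R * ∫ x in Set.Ioi (0:ℝ), H x) - 1) := by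
  set M := ∫ x in Ioi (0:ℝ), H x
  have hg' : g = fun x => ∫ z in Ioc 0 L, torKernel L R H 0 z * torKernel L R H x z :=
    funext fun x => by rw [hg, integral_of_le hL.le]; rfl
  have hg0 : ∀ x, 0 ≤ g x := fun x => by
    rw [hg']; exact setIntegral_nonneg measurableSet_Ioc fun z _ => mul_nonneg (h0 _) (h0 _)
  have hgB : ∀ x, g x ≤ 2 * R * M := fun x => by
    rw [hg']; exact integral_torKernel_mul_le hL.le hR hmeas h0 h1 hint x
  have hB : 0 ≤ 2 * R * M := (hg0 0).trans (hgB 0)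
  calc _ ≤ (∫ x in Icc 0 L, g x) / α * (exp (2 * R * M) - 1) :=
        setIntegral_exp_sub_one_le hα hB measurableSet_Icc measure_Icc_lt_top
          (hg' ▸ measurable_integral_torKernel_mul hmeas).aestronglyMeasurable
          (fun x _ => hg0 x) (fun x _ => hgB x)
    _ ≤ 2 * R * M * (2 * R * M) / α * (exp (2 * R * M) - 1) := by
        gcongr
        · exact sub_nonneg.2 (one_le_exp hB)
        · rw [integral_Icc_eq_integral_Ioc, hg']
          exact integral_integral_torKernel_mul_le hL.le hR hmeas h0 h1 hint
    _ = _ := by ring
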